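/- arXiv:0712.0663 — 6 statements merged into one kernel-verified Lean document; each statement's English description precedes it below -/
import Mathlib

section
/- Every finite directed graph contains a quasi-kernel, i.e., an independent set A such that every vertex is reachable from some vertex of A by a directed path of length at most 2. -/
/-- There is a directed path of length at most `n` from `x` to `y`. -/
def PathLe {V : Type*} (E : V → V → Prop) (n : ℕ) (x y : V) : Prop :=
  ∃ k ≤ n, ∃ f : ℕ → V, f 0 = x ∧ f k = y ∧ ∀ i < k, E (f i) (f (i + 1))

/-- A directed path of length at most `n` from `x` to `y` all of whose vertices lie in `W`. -/
def PathLeIn {V : Type*} (E : V → V → Prop) (W : Set V) (n : ℕ) (x y : V) : Prop :=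
  ∃ k ≤ n, ∃ f : ℕ → V, f 0 = x ∧ f k = y ∧ (∀ i ≤ k, f i ∈ W) ∧ ∀ i < k, E (f i) (f (i + 1))

/-- `A` spans no edges of `E` (in either direction). -/
def Indep {V : Type*} (E : V → V → Prop) (A : Set V) : Prop :=
  ∀ a ∈ A, ∀ b ∈ A, ¬ E a b

/-- The induced subgraph on `W` is in the class `O_n`: some independent set `A ⊆ W`
reaches every vertex of `W` by a directed path of length at most `n` inside `W`. -/
def OutClass {V : Type*} (E : V → V → Prop) (n : ℕ) (W : Set V) : Prop :=
  ∃ A ⊆ W, Indep E A ∧ ∀ v ∈ W, ∃ a ∈ A, PathLeIn E W n a v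

/-- The induced subgraph on `W` is in the class `I_n`: some independent set `A ⊆ W`
is reached from every vertex of `W` by a directed path of length at most `n` inside `W`. -/
def InClass {V : Type*} (E : V → V → Prop) (n : ℕ) (W : Set V) : Prop :=
  ∃ A ⊆ W, Indep E A ∧ ∀ v ∈ W, ∃ a ∈ A, PathLeIn E W n v a

/-- The induced subgraph on `W` is in `IO(m, ℓ)`. -/
def IOClass {V : Type*} (E : V → V → Prop) (m ℓ : ℕ) (W : Set V) : Prop :=
  ∃ V₁ V₂ : Set V, V₁ ∪ V₂ = W ∧ Disjoint V₁ V₂ ∧ InClass E m V₁ ∧ OutClass E ℓ V₂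

/-- `E` is a tournament: no loops and exactly one direction between distinct vertices. -/
def IsTournament {V : Type*} (E : V → V → Prop) : Prop :=
  (∀ x, ¬ E x x) ∧ ∀ x y, x ≠ y → (E x y ↔ ¬ E y x)

/-!
Chvátal–Lovász: pick any vertex `u` and delete `u` together with its out-neighbours. By induction
the rest has a quasi-kernel `Q`. If some `q ∈ Q` has an edge `q → u`, then `Q` already reaches `u`
in one step and every out-neighbour of `u` in two. Otherwise `u` has no edge to or from `Q` (its
out-neighbours were deleted), so `insert u Q` is independent and reaches `u` and its
out-neighbours within one step.
-/

section QuasiKernel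

variable {V : Type*} {E : V → V → Prop}

lemma pathLe_refl (n : ℕ) (x : V) : PathLe E n x x :=
  ⟨0, n.zero_le, fun _ => x, rfl, rfl, by simp⟩

lemma pathLe_of_adj {n : ℕ} {x y : V} (hn : 1 ≤ n) (hxy : E x y) : PathLe E n x y :=
  ⟨1, hn, fun i => if i = 0 then x else y, rfl, rfl, by simpa using hxy⟩

lemma pathLe_of_adj_of_adj {n : ℕ} {x y z : V} (hn : 2 ≤ n) (hxy : E x y) (hyz : E y z) :
    PathLe E n x z := by
  refine ⟨2, hn, fun i => if i = 0 then x else if i = 1 then y else z, rfl, rfl, ?_⟩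
  intro i hi
  interval_cases i <;> simpa

lemma indep_insert {A : Set V} {u : V} :
    Indep E (insert u A) ↔ ¬ E u u ∧ (∀ a ∈ A, ¬ E u a) ∧ (∀ a ∈ A, ¬ E a u) ∧ Indep E A := by
  simp only [Indep, Set.forall_mem_insert, forall₂_and, and_assoc]

/-- Unlike a quasi-kernel of the induced subgraph, the short paths from `A` may leave `W`. -/
def IsQuasiKernelOn (E : V → V → Prop) (W A : Set V) : Prop :=
  A ⊆ W ∧ Indep E A ∧ ∀ v ∈ W, ∃ a ∈ A, PathLe E 2 a v

lemma IsQuasiKernelOn.exists_of_deleteOutNbhd (hirr : ∀ v, ¬ E v v) {W Q : Set V} {u : V}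
    (hu : u ∈ W) (hQ : IsQuasiKernelOn E {w ∈ W | w ≠ u ∧ ¬ E u w} Q) :
    ∃ A, IsQuasiKernelOn E W A := by
  obtain ⟨hQdel, hQind, hQreach⟩ := hQ
  have hQdel : ∀ q ∈ Q, q ∈ W ∧ q ≠ u ∧ ¬ E u q := hQdel
  have hQW : Q ⊆ W := fun q hq => (hQdel q hq).1
  have hdeleted : ∀ v ∈ W, (v ≠ u ∧ ¬ E u v) ∨ v = u ∨ E u v := by tauto
  by_cases hback : ∃ q ∈ Q, E q u
  · obtain ⟨q, hq, hqu⟩ := hback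
    refine ⟨Q, hQW, hQind, fun v hv => ?_⟩
    rcases hdeleted v hv with hkept | rfl | huv
    · exact hQreach v ⟨hv, hkept⟩
    · exact ⟨q, hq, pathLe_of_adj one_le_two hqu⟩
    · exact ⟨q, hq, pathLe_of_adj_of_adj le_rfl hqu huv⟩
  · push Not at hback
    refine ⟨insert u Q, Set.insert_subset hu hQW,
      indep_insert.2 ⟨hirr u, fun q hq => (hQdel q hq).2.2, hback, hQind⟩, fun v hv => ?_⟩
    rcases hdeleted v hv with hkept | rfl | huv
    · obtain ⟨a, ha, hav⟩ := hQreach v ⟨hv, hkept⟩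
      exact ⟨a, Set.mem_insert_of_mem u ha, hav⟩
    · exact ⟨v, Set.mem_insert v Q, pathLe_refl 2 v⟩
    · exact ⟨u, Set.mem_insert u Q, pathLe_of_adj one_le_two huv⟩

lemma exists_isQuasiKernelOn (hirr : ∀ v, ¬ E v v) (W : Finset V) :
    ∃ A, IsQuasiKernelOn E W A := by
  classical
  induction W using Finset.strongInduction with
  | H W ih =>
    obtain rfl | ⟨u, hu⟩ := W.eq_empty_or_nonempty
    · exact ⟨∅, ⟨by simp, by simp [Indep], by simp⟩⟩
    · have hsmaller : W.filter (fun w => w ≠ u ∧ ¬ E u w) ⊂ W :=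
        Finset.filter_ssubset.2 ⟨u, hu, by simp⟩
      obtain ⟨Q, hQ⟩ := ih _ hsmaller
      rw [Finset.coe_filter] at hQ
      exact hQ.exists_of_deleteOutNbhd hirr hu

end QuasiKernel

/-- Every finite digraph contains a quasi-kernel. -/
theorem every_finite_digraph_has_quasi_kernel {V : Type*} [Fintype V]
    (E : V → V → Prop) (hirr : ∀ v, ¬ E v v) :
    ∃ A : Set V, Indep E A ∧ ∀ v : V, ∃ a ∈ A, PathLe E 2 a v := by
  obtain ⟨A, -, hind, hreach⟩ := exists_isQuasiKernelOn hirr (Finset.univ : Finset V)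
  exact ⟨A, hind, fun v => hreach v (by simp)⟩
end

section
/- Let n ≥ 1 and let G=(V,E) be a digraph with a partition (V₀,V₁,…,V_k) of V such that: every induced subgraph of G[V₀] is in O_{n+1}, every induced subgraph of G[V_i] is in O_n for 1 ≤ i < k, and G[V_k] is in O_n (when k ≥ 1). Then G is in O_{n+1}. -/
/-!
Induct on `k`, peeling off the last part `Q := V_k`. Let `A` witness `G[Q] ∈ O_n` and let `U` be the
set of vertices outside `Q` not hit by an edge from `A`; by induction `G[U] ∈ O_{n+1}` (this is why
the hypotheses on the earlier parts must be hereditary), say via `B`. Then `B` together with the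
vertices of `A` without in-neighbour in `B` is independent and reaches everything within `n + 1`
steps: every vertex outside `U` is reached from `A` within `n` steps (in one step if it lies outside
`Q`, which is where `1 ≤ n` enters), and a dropped vertex of `A` is one edge away from `B`.
-/

open Set

section

variable {V : Type*} {E : V → V → Prop}

def HereditarilyOut (E : V → V → Prop) (n : ℕ) (W : Set V) : Prop :=
  ∀ U ⊆ W, OutClass E n U

namespace PathLeIn

variable {W W' : Set V} {n n' : ℕ} {x y : V}

lemma refl (hx : x ∈ W) : PathLeIn E W 0 x x :=
  ⟨0, le_rfl, fun _ => x, rfl, rfl, fun _ _ => hx, fun _ h => absurd h (Nat.not_lt_zero _)⟩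

lemma mono (hW : W ⊆ W') (hn : n ≤ n') (h : PathLeIn E W n x y) : PathLeIn E W' n' x y := by
  obtain ⟨k, hk, f, hf0, hfk, hmem, hedge⟩ := h
  exact ⟨k, hk.trans hn, f, hf0, hfk, fun i hi => hW (hmem i hi), hedge⟩

lemma cons {b : V} (hb : b ∈ W) (hbx : E b x) (h : PathLeIn E W n x y) :
    PathLeIn E W (n + 1) b y := by
  obtain ⟨k, hk, f, hf0, hfk, hmem, hedge⟩ := h
  refine ⟨k + 1, by omega, fun i => Nat.casesOn i b f, rfl, hfk, ?_, ?_⟩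
  · rintro (_ | i) hi
    exacts [hb, hmem i (by omega)]
  · rintro (_ | i) hi
    exacts [show E b (f 0) from hf0 ▸ hbx, hedge i (by omega)]

lemma single (hx : x ∈ W) (hy : y ∈ W) (hxy : E x y) : PathLeIn E W 1 x y :=
  cons hx hxy (refl hy)

end PathLeIn

lemma indep_union_sep_not_adj {A B : Set V} (hA : Indep E A) (hB : Indep E B)
    (hAB : ∀ a ∈ A, ∀ b ∈ B, ¬ E a b) : Indep E (B ∪ {a ∈ A | ∀ b ∈ B, ¬ E b a}) := by
  rintro x (hx | hx) y (hy | hy)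
  exacts [hB x hx y hy, hy.2 x hx, hAB x hx.1 y hy, hA x hx.1 y hy.1]

lemma exists_pathLeIn_succ_of_mem_union_sep {A B W : Set V} {n : ℕ} (hBW : B ⊆ W) {a v : V}
    (ha : a ∈ A) (hav : PathLeIn E W n a v) :
    ∃ c ∈ B ∪ {a ∈ A | ∀ b ∈ B, ¬ E b a}, PathLeIn E W (n + 1) c v := by
  by_cases hdropped : ∃ b ∈ B, E b a
  · obtain ⟨b, hb, hba⟩ := hdropped
    exact ⟨b, Or.inl hb, hav.cons (hBW hb) hba⟩
  · exact ⟨a, Or.inr ⟨ha, fun b hb hba => hdropped ⟨b, hb, hba⟩⟩, hav.mono le_rfl n.le_succ⟩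

lemma HereditarilyOut.mono {n : ℕ} {W W' : Set V} (h : HereditarilyOut E n W') (hW : W ⊆ W') :
    HereditarilyOut E n W :=
  fun U hU => h U (hU.trans hW)

lemma OutClass.union_of_hereditarilyOut {n : ℕ} (hn : 1 ≤ n) {Q R : Set V}
    (hQ : OutClass E n Q) (hR : HereditarilyOut E (n + 1) R) : OutClass E (n + 1) (R ∪ Q) := by
  obtain ⟨A, hAQ, hA, hAcov⟩ := hQ
  obtain ⟨B, hBU, hB, hBcov⟩ := hR {v ∈ R \ Q | ∀ a ∈ A, ¬ E a v} fun v hv => hv.1.1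
  have hBW : B ⊆ R ∪ Q := fun b hb => Or.inl (hBU hb).1.1
  refine ⟨_, union_subset hBW fun a ha => Or.inr (hAQ ha.1),
    indep_union_sep_not_adj hA hB fun a ha b hb => (hBU hb).2 a ha, fun v hv => ?_⟩
  by_cases hvU : v ∈ {v ∈ R \ Q | ∀ a ∈ A, ¬ E a v}
  · obtain ⟨b, hb, hbv⟩ := hBcov v hvU
    exact ⟨b, Or.inl hb, hbv.mono (fun u hu => Or.inl hu.1.1) le_rfl⟩
  have hreach : ∃ a ∈ A, PathLeIn E (R ∪ Q) n a v := by
    by_cases hvQ : v ∈ Q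
    · obtain ⟨a, ha, hav⟩ := hAcov v hvQ
      exact ⟨a, ha, hav.mono subset_union_right le_rfl⟩
    · obtain ⟨a, ha, hav⟩ : ∃ a ∈ A, E a v := by
        by_contra! h
        exact hvU ⟨⟨hv.resolve_right hvQ, hvQ⟩, h⟩
      exact ⟨a, ha, (PathLeIn.single (subset_union_right (hAQ ha)) hv hav).mono le_rfl hn⟩
  obtain ⟨a, ha, hav⟩ := hreach
  exact exists_pathLeIn_succ_of_mem_union_sep hBW ha hav

lemma HereditarilyOut.union {n : ℕ} (hn : 1 ≤ n) {Q R : Set V}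
    (hQ : HereditarilyOut E n Q) (hR : HereditarilyOut E (n + 1) R) :
    HereditarilyOut E (n + 1) (R ∪ Q) := by
  intro W hW
  have hsplit : W = W ∩ R ∪ W ∩ Q := by rw [← inter_union_distrib_left, inter_eq_left.2 hW]
  rw [hsplit]
  exact (hQ _ inter_subset_right).union_of_hereditarilyOut hn (hR.mono inter_subset_right)

lemma hereditarilyOut_accumulate {n : ℕ} (hn : 1 ≤ n) {Q : ℕ → Set V}
    (h0 : HereditarilyOut E (n + 1) (Q 0)) {j : ℕ}
    (hmid : ∀ i, 0 < i → i ≤ j → HereditarilyOut E n (Q i)) :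
    HereditarilyOut E (n + 1) (accumulate Q j) := by
  induction j with
  | zero => simpa using h0
  | succ j ih =>
    rw [accumulate_succ]
    exact (hmid _ j.succ_pos le_rfl).union hn (ih fun i hi hij => hmid i hi (by omega))

lemma outClass_accumulate {n : ℕ} (hn : 1 ≤ n) {Q : ℕ → Set V} {k : ℕ}
    (h0 : HereditarilyOut E (n + 1) (Q 0))
    (hmid : ∀ i, 0 < i → i < k → HereditarilyOut E n (Q i))
    (hlast : 1 ≤ k → OutClass E n (Q k)) :
    OutClass E (n + 1) (accumulate Q k) := by
  cases k with
  | zero => simpa using h0 _ subset_rfl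
  | succ m =>
    rw [accumulate_succ]
    exact (hlast m.succ_pos).union_of_hereditarilyOut hn
      (hereditarilyOut_accumulate hn h0 fun i hi him => hmid i hi (by omega))

end

theorem stepping_up_out_general {V : Type*} (E : V → V → Prop) (n k : ℕ) (hn : 1 ≤ n)
    (P : Fin (k + 1) → Set V)
    (hcover : (⋃ i, P i) = Set.univ)
    (h0 : ∀ W ⊆ P 0, OutClass E (n + 1) W)
    (hmid : ∀ i : Fin (k + 1), 0 < (i : ℕ) → (i : ℕ) < k → ∀ W ⊆ P i, OutClass E n W)
    (hlast : 1 ≤ k → OutClass E n (P (Fin.last k))) :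
    OutClass E (n + 1) Set.univ := by
  have hclamp {i : ℕ} (hi : i ≤ k) : Fin.clamp i k = ⟨i, by omega⟩ :=
    Fin.ext (by simp [Fin.coe_clamp, hi])
  have huniv : accumulate (fun i => P (Fin.clamp i k)) k = univ := by
    refine eq_univ_of_univ_subset (hcover ▸ iUnion_subset fun j v hv => ?_)
    exact mem_accumulate.2 ⟨j, by omega, by rwa [hclamp (by omega)]⟩
  rw [← huniv]
  refine outClass_accumulate hn (hclamp k.zero_le ▸ h0) (fun i hi hik => ?_) (fun hk => ?_)
  · rw [hclamp hik.le]
    exact hmid _ hi hik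
  · exact hclamp le_rfl ▸ hlast hk

/-- Stepping-up theorem for the classes `O_n`. -/
theorem stepping_up_out {V : Type*} (E : V → V → Prop) (n k : ℕ) (hn : 1 ≤ n)
    (P : Fin (k + 1) → Set V)
    (hcover : (⋃ i, P i) = Set.univ)
    (hdisj : ∀ i j, i ≠ j → Disjoint (P i) (P j))
    (h0 : ∀ W ⊆ P 0, OutClass E (n + 1) W)
    (hmid : ∀ i : Fin (k + 1), 0 < (i : ℕ) → (i : ℕ) < k → ∀ W ⊆ P i, OutClass E n W)
    (hlast : 1 ≤ k → OutClass E n (P (Fin.last k))) :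
    OutClass E (n + 1) Set.univ :=
  stepping_up_out_general E n k hn P hcover h0 hmid hlast
end

section
/- Every digraph with finite chromatic number is in O₂, i.e., has a quasi-kernel. -/
/-!
Colour classes are added one at a time. Given an independent set `C ⊆ W`, let `P` be the set of
vertices of `W` outside `C` with no in-neighbour in `C`, and let `Q` be a quasi-kernel of `P`.
Then `Q` together with the vertices of `C` having no in-neighbour in `Q` is a quasi-kernel of `W`:
a vertex of `C` is reached from `Q` in one step or lies in it, and a vertex of `W \ (C ∪ P)` has an
in-neighbour `u ∈ C`, which is itself reached from `Q` in one step or lies in the quasi-kernel.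
-/

section QuasiKernel

variable {V : Type*} {E : V → V → Prop}

namespace PathLeIn

variable {W : Set V} {n : ℕ} {a b c : V}

theorem mono_set {P : Set V} (hPW : P ⊆ W) (h : PathLeIn E P n a b) : PathLeIn E W n a b := by
  obtain ⟨k, hk, f, hf0, hfk, hmem, hstep⟩ := h
  exact ⟨k, hk, f, hf0, hfk, fun i hi => hPW (hmem i hi), hstep⟩

theorem refl_s3 (ha : a ∈ W) : PathLeIn E W n a a :=
  ⟨0, n.zero_le, fun _ => a, rfl, rfl, fun _ _ => ha, fun _ hi => absurd hi (Nat.not_lt_zero _)⟩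

theorem cons_s3 (ha : a ∈ W) (hab : E a b) (h : PathLeIn E W n b c) :
    PathLeIn E W (n + 1) a c := by
  obtain ⟨k, hk, f, hf0, hfk, hmem, hstep⟩ := h
  refine ⟨k + 1, by omega, fun i => if i = 0 then a else f (i - 1), by simp, by simpa using hfk,
    fun i hi => ?_, fun i hi => ?_⟩
  · rcases i with _ | i
    · simpa using ha
    · simpa using hmem i (by omega)
  · rcases i with _ | i
    · simpa [hf0] using hab
    · simpa using hstep i (by omega)

theorem of_edge (ha : a ∈ W) (hb : b ∈ W) (hab : E a b) : PathLeIn E W (n + 1) a b :=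
  cons_s3 ha hab (refl_s3 hb)

end PathLeIn

theorem outClass_empty (n : ℕ) : OutClass E n ∅ :=
  ⟨∅, le_rfl, fun _ ha => ha.elim, fun _ hv => hv.elim⟩

theorem OutClass.of_indep_of_outClass_unreached {W C : Set V} (hCW : C ⊆ W) (hC : Indep E C)
    (hP : OutClass E 2 {v | v ∈ W ∧ v ∉ C ∧ ∀ u ∈ C, ¬ E u v}) : OutClass E 2 W := by
  obtain ⟨Q, hQP, hQ, hQcov⟩ := hP
  have hQW : Q ⊆ W := fun q hq => (hQP hq).1
  set C' : Set V := {v | v ∈ C ∧ ∀ q ∈ Q, ¬ E q v}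
  have hC_split : ∀ u ∈ C, u ∈ C' ∨ ∃ q ∈ Q, E q u := fun u hu =>
    (em (∃ q ∈ Q, E q u)).symm.imp (fun h => ⟨hu, fun q hq hqu => h ⟨q, hq, hqu⟩⟩) id
  refine ⟨Q ∪ C', Set.union_subset hQW fun v hv => hCW hv.1, ?_, fun v hv => ?_⟩
  · rintro a (ha | ha) b (hb | hb) hab
    · exact hQ a ha b hb hab
    · exact hb.2 a ha hab
    · exact (hQP hb).2.2 a ha.1 hab
    · exact hC a ha.1 b hb.1 hab
  by_cases hvC : v ∈ C
  · rcases hC_split v hvC with hv' | ⟨q, hqQ, hqv⟩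
    · exact ⟨v, Or.inr hv', PathLeIn.refl_s3 hv⟩
    · exact ⟨q, Or.inl hqQ, PathLeIn.of_edge (hQW hqQ) hv hqv⟩
  by_cases hin : ∃ u ∈ C, E u v
  · obtain ⟨u, huC, huv⟩ := hin
    rcases hC_split u huC with hu' | ⟨q, hqQ, hqu⟩
    · exact ⟨u, Or.inr hu', PathLeIn.of_edge (hCW huC) hv huv⟩
    · exact ⟨q, Or.inl hqQ, PathLeIn.cons_s3 (hQW hqQ) hqu (PathLeIn.of_edge (hCW huC) hv huv)⟩
  · obtain ⟨q, hqQ, hpath⟩ := hQcov v ⟨hv, hvC, fun u hu huv => hin ⟨u, hu, huv⟩⟩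
    exact ⟨q, Or.inl hqQ, hpath.mono_set fun _ hx => hx.1⟩

theorem outClass_two_of_coloring {ι : Type*} (c : V → ι) (hc : ∀ u v, E u v → c u ≠ c v)
    (s : Finset ι) {W : Set V} (hW : ∀ v ∈ W, c v ∈ s) : OutClass E 2 W := by
  classical
  induction s using Finset.induction_on generalizing W with
  | empty =>
    obtain rfl : W = ∅ := Set.eq_empty_of_forall_notMem fun v hv => by simpa using hW v hv
    exact outClass_empty 2
  | insert i s _ ih =>
    refine OutClass.of_indep_of_outClass_unreached (C := {v | v ∈ W ∧ c v = i})
      (fun v hv => hv.1) (fun a ha b hb hab => hc a b hab (ha.2.trans hb.2.symm)) (ih ?_)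
    rintro v ⟨hv, hvi, -⟩
    exact (Finset.mem_insert.mp (hW v hv)).resolve_left fun h => hvi ⟨hv, h⟩

end QuasiKernel

/-- Every digraph with finite chromatic number has a quasi-kernel. -/
theorem finite_chromatic_quasi_kernel {V : Type*} (E : V → V → Prop)
    (hchrom : ∃ (k : ℕ) (c : V → Fin k), ∀ u v, E u v → c u ≠ c v) :
    OutClass E 2 Set.univ := by
  obtain ⟨k, c, hc⟩ := hchrom
  exact outClass_two_of_coloring c hc Finset.univ fun v _ => Finset.mem_univ (c v)
end

section
/- Let ℓ,m ≥ 1 and let G=(V,E) be a digraph with a partition (V₀,V₁,…,V_k) such that: every induced subgraph of G[V₀] is in IO(m+1,ℓ+1), every induced subgraph of G[V_i] is in IO(m,ℓ) for 1 ≤ i < k, and G[V_k] ∈ IO(m,ℓ) when k ≥ 1. Then G ∈ IO(m+1,ℓ+1). -/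
/-!
Process the parts from `V_k` down to `V₀`. Suppose `V_{i+1} ∪ … ∪ V_k` is already split into an
in-part with a set `A` of sinks and an out-part with a set `B` of sources. The vertices of `V_i`
with an edge into `A` join the in-part, the remaining ones with an edge from `B` join the
out-part, and the rest `W` is split by the hypothesis on `G[W]`; the new sinks have no edge into
`A` and the new sources no edge from `B`. So `A` and `B` need not be independent, but every edge
inside `A` goes from a higher part to a lower one, and inside `B` the other way. Such a set has
a kernel `K`: an independent subset such that every vertex of `A \ K` has an edge into `K`. Going
on to `K` costs one more step, except for targets in `V₀`, which all lie in `K`; this is why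
`V₀` is allowed the larger radii.
-/

open Set

section SteppingUp

variable {V : Type*} {E : V → V → Prop} {W W' : Set V} {n n' : ℕ} {x y z : V}

theorem PathLeIn.mono_s4 (h : PathLeIn E W n x y) (hW : W ⊆ W') (hn : n ≤ n') :
    PathLeIn E W' n' x y := by
  obtain ⟨c, hc, f, h0, hc', hf, hE⟩ := h
  exact ⟨c, hc.trans hn, f, h0, hc', fun i hi => hW (hf i hi), hE⟩

theorem PathLeIn.refl_s4 (hx : x ∈ W) : PathLeIn E W n x x :=
  ⟨0, n.zero_le, fun _ => x, rfl, rfl, fun _ _ => hx, fun _ h => absurd h (Nat.not_lt_zero _)⟩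

theorem PathLeIn.snoc (h : PathLeIn E W n x y) (hz : z ∈ W) (hyz : E y z) :
    PathLeIn E W (n + 1) x z := by
  obtain ⟨c, hc, f, h0, hc', hf, hE⟩ := h
  refine ⟨c + 1, by omega, fun i => if i ≤ c then f i else z, by simp [h0], by simp, ?_, ?_⟩
  · intro i hi
    dsimp only
    split_ifs with h
    exacts [hf i h, hz]
  · intro i hi
    rcases Nat.lt_or_ge i c with h | h
    · simpa [h.le, Nat.succ_le_of_lt h] using hE i h
    · obtain rfl : i = c := by omega
      simpa [hc'] using hyz

theorem pathLeIn_of_adj (hx : x ∈ W) (hy : y ∈ W) (hxy : E x y) (hn : 1 ≤ n) :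
    PathLeIn E W n x y :=
  ((PathLeIn.refl_s4 (n := 0) hx).snoc hy hxy).mono_s4 subset_rfl hn

theorem PathLeIn.flip (h : PathLeIn E W n x y) : PathLeIn (flip E) W n y x := by
  obtain ⟨c, hc, f, h0, hc', hf, hE⟩ := h
  refine ⟨c, hc, fun i => f (c - i), by simpa using hc', by simpa using h0,
    fun i _ => hf _ (Nat.sub_le c i), fun i hi => ?_⟩
  have := hE (c - (i + 1)) (by omega)
  rwa [show c - (i + 1) + 1 = c - i by omega] at this

theorem indep_flip_iff {A : Set V} : Indep (flip E) A ↔ Indep E A :=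
  ⟨fun h a ha b hb => h b hb a ha, fun h a ha b hb => h b hb a ha⟩

theorem inClass_flip_iff : InClass (flip E) n W ↔ OutClass E n W := by
  constructor <;> rintro ⟨A, hAW, hA, hcov⟩ <;>
    exact ⟨A, hAW, indep_flip_iff.1 hA, fun v hv => (hcov v hv).imp fun a h => ⟨h.1, h.2.flip⟩⟩

variable (E) (f : V → ℕ)

def EdgesDescend (A : Set V) : Prop :=
  ∀ a ∈ A, ∀ b ∈ A, E a b → f b < f a

def GradedIn (r : ℕ → ℕ) (S A : Set V) : Prop :=
  A ⊆ S ∧ EdgesDescend E f A ∧ ∀ v ∈ S, ∃ a ∈ A, PathLeIn E S (r (f a)) v a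

def GradedIO (r s : ℕ → ℕ) (U : Set V) : Prop :=
  ∃ S₁ S₂ A B : Set V, S₁ ∪ S₂ = U ∧ Disjoint S₁ S₂ ∧
    GradedIn E f r S₁ A ∧ GradedIn (flip E) f s S₂ B

variable {E f} {r s : ℕ → ℕ} {A S T L U : Set V}

theorem EdgesDescend.exists_kernel (hA : EdgesDescend E f A) (hn : ∀ a ∈ A, f a < n) :
    ∃ K ⊆ A, Indep E K ∧ ∀ a ∈ A, a ∈ K ∨ ∃ x ∈ K, E a x := by
  induction n generalizing A with
  | zero => exact ⟨∅, empty_subset _, fun _ h => h.elim, fun a ha => absurd (hn a ha) (by omega)⟩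
  | succ n ih =>
    obtain ⟨K, hKA, hK, habs⟩ := ih (A := {a ∈ A | f a < n})
      (fun a ha b hb => hA a ha.1 b hb.1) (fun a ha => ha.2)
    refine ⟨K ∪ {a ∈ A | f a = n ∧ ∀ x ∈ K, ¬ E a x},
      union_subset (hKA.trans (sep_subset _ _)) (sep_subset _ _), ?_, ?_⟩
    · rintro a (ha | ⟨ha, hfa, haK⟩) b (hb | ⟨hb, hfb, -⟩) hab
      · exact hK a ha b hb hab
      · exact absurd (hA a (hKA ha).1 b hb hab) (by have := (hKA ha).2; omega)
      · exact haK b hb hab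
      · exact absurd (hA a ha b hb hab) (by omega)
    · intro a ha
      rcases Nat.lt_or_ge (f a) n with hlt | hge
      · exact (habs a ⟨ha, hlt⟩).imp Or.inl fun ⟨x, hx, hax⟩ => ⟨x, Or.inl hx, hax⟩
      · by_cases haK : ∀ x ∈ K, ¬ E a x
        · exact Or.inl (Or.inr ⟨ha, by have := hn a ha; omega, haK⟩)
        · push Not at haK
          obtain ⟨x, hx, hax⟩ := haK
          exact Or.inr ⟨x, Or.inl hx, hax⟩

theorem GradedIn.inClass (h : GradedIn E f r S A) (hA : ∀ a ∈ A, f a < n')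
    (hr₀ : r 0 ≤ n) (hr : ∀ j, r (j + 1) < n) : InClass E n S := by
  obtain ⟨hAS, hdesc, hcov⟩ := h
  obtain ⟨K, hKA, hK, habs⟩ := hdesc.exists_kernel hA
  refine ⟨K, hKA.trans hAS, hK, fun v hv => ?_⟩
  obtain ⟨a, ha, hpath⟩ := hcov v hv
  rcases habs a ha with haK | ⟨x, hxK, hax⟩
  · refine ⟨a, haK, hpath.mono_s4 subset_rfl ?_⟩
    cases f a with
    | zero => exact hr₀
    | succ j => exact (hr j).le
  · -- `a ∉ K` is absorbed by a vertex of lower level, so `a` is not on level 0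
    obtain ⟨j, hj⟩ := Nat.exists_eq_succ_of_ne_zero
      (Nat.ne_zero_of_lt (hdesc a ha x (hKA hxK) hax))
    exact ⟨x, hxK, (hpath.snoc (hAS (hKA hxK)) hax).mono_s4 subset_rfl (hj ▸ hr j)⟩

theorem InClass.exists_gradedIn {i : ℕ} (h : InClass E (r i) S) (hS : ∀ v ∈ S, f v = i) :
    ∃ A, GradedIn E f r S A := by
  obtain ⟨A, hAS, hA, hcov⟩ := h
  refine ⟨A, hAS, fun a ha b hb hab => (hA a ha b hb hab).elim, fun v hv => ?_⟩
  obtain ⟨a, ha, hpath⟩ := hcov v hv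
  exact ⟨a, ha, hS a (hAS ha) ▸ hpath⟩

theorem IOClass.gradedIO {i : ℕ} (h : IOClass E (r i) (s i) L) (hL : ∀ v ∈ L, f v = i) :
    GradedIO E f r s L := by
  obtain ⟨S₁, S₂, hunion, hdisj, h₁, h₂⟩ := h
  obtain ⟨A, hA⟩ := h₁.exists_gradedIn fun v hv => hL v (hunion ▸ Or.inl hv)
  obtain ⟨B, hB⟩ := (inClass_flip_iff.2 h₂).exists_gradedIn fun v hv => hL v (hunion ▸ Or.inr hv)
  exact ⟨S₁, S₂, A, B, hunion, hdisj, hA, hB⟩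

theorem GradedIn.union_of_forall_adj {N : Set V} (h : GradedIn E f r S A)
    (hN : ∀ v ∈ N, ∃ a ∈ A, E v a) (hr : ∀ j, 1 ≤ r j) : GradedIn E f r (S ∪ N) A := by
  obtain ⟨hAS, hdesc, hcov⟩ := h
  refine ⟨hAS.trans subset_union_left, hdesc, ?_⟩
  rintro v (hv | hv)
  · obtain ⟨a, ha, hpath⟩ := hcov v hv
    exact ⟨a, ha, hpath.mono_s4 subset_union_left le_rfl⟩
  · obtain ⟨a, ha, hva⟩ := hN v hv
    exact ⟨a, ha, pathLeIn_of_adj (Or.inr hv) (Or.inl (hAS ha)) hva (hr _)⟩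

theorem GradedIn.union {B : Set V} (hA : GradedIn E f r S A) (hB : GradedIn E f r T B)
    (hAB : ∀ a ∈ A, ∀ b ∈ B, f b < f a) (hBA : ∀ b ∈ B, ∀ a ∈ A, ¬ E b a) :
    GradedIn E f r (S ∪ T) (A ∪ B) := by
  obtain ⟨hAS, hAdesc, hAcov⟩ := hA
  obtain ⟨hBT, hBdesc, hBcov⟩ := hB
  refine ⟨union_subset_union hAS hBT, ?_, ?_⟩
  · rintro a (ha | ha) b (hb | hb) hab
    exacts [hAdesc a ha b hb hab, hAB a ha b hb, (hBA a ha b hb hab).elim, hBdesc a ha b hb hab]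
  · rintro v (hv | hv)
    · obtain ⟨a, ha, hpath⟩ := hAcov v hv
      exact ⟨a, Or.inl ha, hpath.mono_s4 subset_union_left le_rfl⟩
    · obtain ⟨b, hb, hpath⟩ := hBcov v hv
      exact ⟨b, Or.inr hb, hpath.mono_s4 subset_union_right le_rfl⟩

theorem union_eq_of_split {S₁ S₂ N M X Y : Set V} (hS : S₁ ∪ S₂ = U) (hN : N ⊆ L) (hM : M ⊆ L)
    (hXY : X ∪ Y = L \ (N ∪ M)) : S₁ ∪ N ∪ X ∪ (S₂ ∪ M ∪ Y) = L ∪ U := by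
  ext v
  have hSv := Set.ext_iff.1 hS v
  have hXYv := Set.ext_iff.1 hXY v
  have hNv := @hN v
  have hMv := @hM v
  simp only [mem_union, mem_sdiff] at hSv hXYv ⊢
  tauto

theorem disjoint_of_split {S₁ S₂ N M X Y : Set V} (hS : S₁ ∪ S₂ = U) (hS' : Disjoint S₁ S₂)
    (hLU : Disjoint L U) (hN : N ⊆ L) (hM : M ⊆ L) (hNM : Disjoint N M)
    (hXY : X ∪ Y = L \ (N ∪ M)) (hXY' : Disjoint X Y) :
    Disjoint (S₁ ∪ N ∪ X) (S₂ ∪ M ∪ Y) := by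
  have hS₁ : S₁ ⊆ U := hS ▸ subset_union_left
  have hS₂ : S₂ ⊆ U := hS ▸ subset_union_right
  have hX : X ⊆ L \ (N ∪ M) := hXY ▸ subset_union_left
  have hY : Y ⊆ L \ (N ∪ M) := hXY ▸ subset_union_right
  refine disjoint_left.2 ?_
  rintro v ((h₁ | h₁) | h₁) ((h₂ | h₂) | h₂)
  · exact disjoint_left.1 hS' h₁ h₂
  · exact disjoint_left.1 hLU (hM h₂) (hS₁ h₁)
  · exact disjoint_left.1 hLU (hY h₂).1 (hS₁ h₁)
  · exact disjoint_left.1 hLU (hN h₁) (hS₂ h₂)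
  · exact disjoint_left.1 hNM h₁ h₂
  · exact (hY h₂).2 (Or.inl h₁)
  · exact disjoint_left.1 hLU (hX h₁).1 (hS₂ h₂)
  · exact (hX h₁).2 (Or.inr h₂)
  · exact disjoint_left.1 hXY' h₁ h₂

theorem GradedIO.union_level {i : ℕ} (hU : GradedIO E f r s U) (hL : ∀ v ∈ L, f v = i)
    (hUi : ∀ v ∈ U, i < f v) (hIO : ∀ W ⊆ L, IOClass E (r i) (s i) W)
    (hr : ∀ j, 1 ≤ r j) (hs : ∀ j, 1 ≤ s j) : GradedIO E f r s (L ∪ U) := by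
  obtain ⟨S₁, S₂, A, B, hunion, hdisj, hA, hB⟩ := hU
  set N := {v ∈ L | ∃ a ∈ A, E v a}
  set M := {v ∈ L | v ∉ N ∧ ∃ b ∈ B, E b v}
  obtain ⟨X, Y, hXY, hXYdisj, hX, hY⟩ := hIO (L \ (N ∪ M)) sdiff_subset
  have hW : ∀ v ∈ X ∪ Y, v ∈ L ∧ v ∉ N ∧ v ∉ M := fun v hv => by
    rw [hXY] at hv
    exact ⟨hv.1, fun h => hv.2 (Or.inl h), fun h => hv.2 (Or.inr h)⟩
  obtain ⟨A₀, hA₀⟩ := hX.exists_gradedIn fun v hv => hL v (hW v (Or.inl hv)).1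
  obtain ⟨B₀, hB₀⟩ := (inClass_flip_iff.2 hY).exists_gradedIn fun v hv => hL v (hW v (Or.inr hv)).1
  have hAU : ∀ a ∈ A, i < f a := fun a ha => hUi a (hunion ▸ Or.inl (hA.1 ha))
  have hBU : ∀ b ∈ B, i < f b := fun b hb => hUi b (hunion ▸ Or.inr (hB.1 hb))
  refine ⟨S₁ ∪ N ∪ X, S₂ ∪ M ∪ Y, A ∪ A₀, B ∪ B₀, ?_, ?_, ?_, ?_⟩
  · exact union_eq_of_split hunion (sep_subset _ _) (sep_subset _ _) hXY
  · exact disjoint_of_split hunion hdisj (disjoint_left.2 fun v hv hvU => (hUi v hvU).ne' (hL v hv))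
      (sep_subset _ _) (sep_subset _ _) (disjoint_left.2 fun v hN hM => hM.2.1 hN) hXY hXYdisj
  · refine (hA.union_of_forall_adj (fun v hv => hv.2) hr).union hA₀
      (fun a ha b hb => hL b (hW b (Or.inl (hA₀.1 hb))).1 ▸ hAU a ha) fun b hb a ha hba => ?_
    obtain ⟨hbL, hbN, -⟩ := hW b (Or.inl (hA₀.1 hb))
    exact hbN ⟨hbL, a, ha, hba⟩
  · refine (hB.union_of_forall_adj (fun v hv => hv.2.2) hs).union hB₀
      (fun a ha b hb => hL b (hW b (Or.inr (hB₀.1 hb))).1 ▸ hBU a ha) fun b hb a ha hab => ?_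
    obtain ⟨hbL, hbN, hbM⟩ := hW b (Or.inr (hB₀.1 hb))
    exact hbM ⟨hbL, hbN, a, ha, hab⟩

theorem gradedIO_univ_of_levels {k : ℕ} (hf : ∀ v, f v ≤ k) (hr : ∀ j, 1 ≤ r j)
    (hs : ∀ j, 1 ≤ s j) (hIO : ∀ i < k, ∀ W ⊆ {v | f v = i}, IOClass E (r i) (s i) W)
    (hk : IOClass E (r k) (s k) {v | f v = k}) : GradedIO E f r s univ := by
  have key : ∀ i ≤ k, GradedIO E f r s {v | i ≤ f v} := by
    intro i hi
    induction hi using Nat.decreasingInduction with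
    | self =>
      have hlevel : {v | k ≤ f v} = {v | f v = k} := ext fun v => (hf v).ge_iff_eq
      exact hlevel ▸ hk.gradedIO fun v hv => hv
    | of_succ i hi ih =>
      have hlevel : {v | i ≤ f v} = {v | f v = i} ∪ {v | i + 1 ≤ f v} := by
        ext v
        simp only [mem_ofPred_eq, mem_union]
        omega
      exact hlevel ▸ ih.union_level (fun v hv => hv) (fun v hv => hv) (hIO i hi) hr hs
  simpa using key 0 k.zero_le

theorem exists_level_of_partition {k : ℕ} (P : Fin (k + 1) → Set V) (hcover : ⋃ i, P i = univ)
    (hdisj : ∀ i j, i ≠ j → Disjoint (P i) (P j)) :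
    ∃ f : V → ℕ, (∀ v, f v ≤ k) ∧ ∀ i : Fin (k + 1), P i = {v | f v = i} := by
  choose g hg using fun v => mem_iUnion.1 (hcover ▸ mem_univ v : v ∈ ⋃ i, P i)
  refine ⟨fun v => g v, fun v => Nat.lt_succ_iff.1 (g v).2, fun i => ext fun v => ⟨?_, ?_⟩⟩
  · intro hv
    by_contra hne
    exact disjoint_left.1 (hdisj _ _ fun h => hne (congrArg Fin.val h)) (hg v) hv
  · intro hv
    exact Fin.ext hv ▸ hg v

end SteppingUp

/-- Stepping-up theorem for the classes `IO(m, ℓ)`. -/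
theorem stepping_up_inout {V : Type*} (E : V → V → Prop) (m ℓ k : ℕ)
    (hm : 1 ≤ m) (hℓ : 1 ≤ ℓ)
    (P : Fin (k + 1) → Set V)
    (hcover : (⋃ i, P i) = Set.univ)
    (hdisj : ∀ i j, i ≠ j → Disjoint (P i) (P j))
    (h0 : ∀ W ⊆ P 0, IOClass E (m + 1) (ℓ + 1) W)
    (hmid : ∀ i : Fin (k + 1), 0 < (i : ℕ) → (i : ℕ) < k → ∀ W ⊆ P i, IOClass E m ℓ W)
    (hlast : 1 ≤ k → IOClass E m ℓ (P (Fin.last k))) :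
    IOClass E (m + 1) (ℓ + 1) Set.univ := by
  obtain ⟨f, hfk, hP⟩ := exists_level_of_partition P hcover hdisj
  have hlevel : ∀ i (hi : i ≤ k), {v | f v = i} = P ⟨i, Nat.lt_succ_of_le hi⟩ :=
    fun i hi => (hP ⟨i, _⟩).symm
  obtain ⟨S₁, S₂, A, B, hunion, hS, hA, hB⟩ :=
    gradedIO_univ_of_levels (r := fun j => if j = 0 then m + 1 else m)
      (s := fun j => if j = 0 then ℓ + 1 else ℓ) hfk (fun j => by split_ifs <;> omega)
      (fun j => by split_ifs <;> omega)
      (fun i hi W hW => by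
        rw [hlevel i hi.le] at hW
        rcases i with _ | i
        · exact h0 W hW
        · exact hmid _ i.succ_pos hi W hW)
      (by
        rw [hlevel k le_rfl]
        rcases k with _ | k
        · exact h0 _ subset_rfl
        · exact hlast k.succ_pos)
  exact ⟨S₁, S₂, hunion, hS, hA.inClass (fun a _ => Nat.lt_succ_of_le (hfk a)) (by simp) (by simp),
    inClass_flip_iff.1 (hB.inClass (fun b _ => Nat.lt_succ_of_le (hfk b)) (by simp) (by simp))⟩
end

section
/- For an infinite tournament G ∈ O_∞, the following are equivalent: (i) G ∉ O₃; (ii) G ∉ O_n for every n ≥ 3; (iii) there is a surjective homomorphism from G onto T₃, where T₃ is the digraph on ℕ with edges {(x,y) : x ≥ y} ∪ {(x,x+1) : x ∈ ℕ}. -/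
/-! If every vertex is reachable from `x₀`, the distance from `x₀` is a homomorphism onto an
initial segment of `T₃`, since an edge raises it by at most one and every level below an occupied
one is occupied. When the distance is unbounded this is a surjection onto `T₃`, and such a
surjection forbids `O_n` for every `n`, since a path of length `n` raises the label by at most
`n`. When the distance is bounded by `3`, `x₀` witnesses `O₃`. Otherwise a vertex `c` of maximal
distance `e ≥ 4` beats every vertex of distance at most `e - 2` (an edge into `c` would put `c`
at distance at most `e - 1`), so it reaches levels `e - 1` and `e` through shortest-path
predecessors within two more steps: `c` witnesses `O₃`. -/

namespace PathLe

variable {V : Type*} {E : V → V → Prop} {m n : ℕ} {x y : V}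

theorem mono (h : PathLe E n x y) (hnm : n ≤ m) : PathLe E m x y := by
  obtain ⟨k, hk, f, hf⟩ := h
  exact ⟨k, hk.trans hnm, f, hf⟩

theorem zero_iff : PathLe E 0 x y ↔ x = y := by
  constructor
  · rintro ⟨k, hk, f, hf0, hfk, -⟩
    obtain rfl : k = 0 := Nat.le_zero.mp hk
    exact hf0.symm.trans hfk
  · rintro rfl
    exact ⟨0, le_rfl, fun _ => x, rfl, rfl, fun _ hi => absurd hi (Nat.not_lt_zero _)⟩

theorem succ_iff : PathLe E (n + 1) x y ↔ PathLe E n x y ∨ ∃ w, PathLe E n x w ∧ E w y := by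
  constructor
  · rintro ⟨k, hk, f, hf0, hfk, hf⟩
    rcases Nat.lt_or_ge n k with hnk | hkn
    · obtain rfl : k = n + 1 := by omega
      exact .inr ⟨f n, ⟨n, le_rfl, f, hf0, rfl, fun i hi => hf i (by omega)⟩, hfk ▸ hf n (by omega)⟩
    · exact .inl ⟨k, hkn, f, hf0, hfk, hf⟩
  · rintro (h | ⟨w, ⟨k, hk, f, hf0, hfk, hf⟩, hwy⟩)
    · exact h.mono n.le_succ
    · refine ⟨k + 1, by omega, fun i => if i ≤ k then f i else y, by simpa using hf0, by simp, ?_⟩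
      intro i hi
      rcases Nat.lt_or_ge i k with hik | hki
      · simpa [hik.le, Nat.succ_le_of_lt hik] using hf i hik
      · obtain rfl : i = k := by omega
        simpa [hfk] using hwy

theorem tail {w : V} (h : PathLe E n x w) (hwy : E w y) : PathLe E (n + 1) x y :=
  succ_iff.mpr (.inr ⟨w, h, hwy⟩)

end PathLe

theorem exists_pathLe_of_reflTransGen {V : Type*} {E : V → V → Prop} {x y : V}
    (h : Relation.ReflTransGen E x y) : ∃ n, PathLe E n x y := by
  induction h with
  | refl => exact ⟨0, PathLe.zero_iff.mpr rfl⟩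
  | tail _ hwy ih =>
    obtain ⟨n, hn⟩ := ih
    exact ⟨n + 1, hn.tail hwy⟩

theorem le_add_of_pathLe {V : Type*} {E : V → V → Prop} {φ : V → ℕ}
    (hφ : ∀ u v, E u v → φ v ≤ φ u + 1) {n : ℕ} {x y : V} (h : PathLe E n x y) :
    φ y ≤ φ x + n := by
  induction n generalizing y with
  | zero => rw [PathLe.zero_iff.mp h]; rfl
  | succ n ih =>
    rcases PathLe.succ_iff.mp h with h | ⟨w, hw, hwy⟩
    · exact (ih h).trans (by omega)
    · exact (hφ w y hwy).trans (by have := ih hw; omega)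

theorem not_exists_pathLe_of_surjective {V : Type*} {E : V → V → Prop} {φ : V → ℕ}
    (hsurj : Function.Surjective φ) (hφ : ∀ u v, E u v → φ v ≤ φ u + 1) (n : ℕ) :
    ¬ ∃ x, ∀ v, PathLe E n x v := by
  rintro ⟨x, hx⟩
  obtain ⟨v, hv⟩ := hsurj (φ x + n + 1)
  have := le_add_of_pathLe hφ (hx v)
  omega

/-- The length of a shortest path from `x` to `y`; junk value `0` when `y` is unreachable. -/
noncomputable def outDist {V : Type*} (E : V → V → Prop) (x y : V) : ℕ :=
  sInf {n | PathLe E n x y}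

section outDist

variable {V : Type*} {E : V → V → Prop} {x u v : V}

theorem pathLe_outDist {n : ℕ} (h : PathLe E n x v) : PathLe E (outDist E x v) x v :=
  Nat.sInf_mem (s := {n | PathLe E n x v}) ⟨n, h⟩

theorem outDist_le {n : ℕ} (h : PathLe E n x v) : outDist E x v ≤ n :=
  Nat.sInf_le h

theorem outDist_le_succ_of_edge (hu : ∃ n, PathLe E n x u) (huv : E u v) :
    outDist E x v ≤ outDist E x u + 1 :=
  outDist_le ((pathLe_outDist hu.choose_spec).tail huv)

theorem exists_edge_outDist_eq_of_outDist_eq_succ {k : ℕ} (hv : outDist E x v = k + 1) :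
    ∃ w, E w v ∧ outDist E x w = k := by
  have hreach : PathLe E (k + 1) x v := by
    refine hv ▸ Nat.sInf_mem (s := {n | PathLe E n x v}) ?_
    by_contra hempty
    simp [outDist, Set.not_nonempty_iff_eq_empty.mp hempty] at hv
  have hnot : ¬ PathLe E k x v := fun h => by have := outDist_le h; omega
  obtain ⟨w, hw, hwv⟩ := (PathLe.succ_iff.mp hreach).resolve_left hnot
  have := outDist_le hw
  have := outDist_le_succ_of_edge ⟨k, hw⟩ hwv
  exact ⟨w, hwv, by omega⟩

theorem exists_outDist_eq_of_le {m : ℕ} (hm : m ≤ outDist E x v) : ∃ u, outDist E x u = m := by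
  induction h : outDist E x v generalizing v with
  | zero => exact ⟨v, by omega⟩
  | succ k ih =>
    rcases Nat.eq_or_lt_of_le (h ▸ hm) with rfl | hlt
    · exact ⟨v, h⟩
    · obtain ⟨w, -, hw⟩ := exists_edge_outDist_eq_of_outDist_eq_succ h
      exact ih (hw ▸ Nat.le_of_lt_succ hlt) hw

theorem surjective_outDist_of_not_bddAbove (hunb : ¬ BddAbove (Set.range (outDist E x))) :
    Function.Surjective (outDist E x) := by
  intro m
  obtain ⟨_, ⟨v, rfl⟩, hv⟩ := not_bddAbove_iff.mp hunb m
  exact exists_outDist_eq_of_le hv.le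

theorem pathLe_of_outDist_add_two_le (htour : IsTournament E) (hreach : ∀ v, ∃ n, PathLe E n x v)
    {c : V} (hc : 2 ≤ outDist E x c) (j : ℕ) {u : V}
    (hu : outDist E x u + 2 ≤ outDist E x c + j) : PathLe E (j + 1) c u := by
  induction j generalizing u with
  | zero =>
    have hne : c ≠ u := by rintro rfl; omega
    have hnot : ¬ E u c := fun h => by have := outDist_le_succ_of_edge (hreach u) h; omega
    exact (PathLe.zero_iff.mpr rfl).tail ((htour.2 c u hne).mpr hnot)
  | succ j ih =>
    by_cases hj : outDist E x u + 2 ≤ outDist E x c + j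
    · exact (ih hj).mono (by omega)
    · obtain ⟨w, hwu, hw⟩ := exists_edge_outDist_eq_of_outDist_eq_succ
        (E := E) (x := x) (v := u) (k := outDist E x c + j - 2) (by omega)
      exact (ih (by omega)).tail hwu

theorem exists_pathLe_three_of_bddAbove (htour : IsTournament E)
    (hreach : ∀ v, ∃ n, PathLe E n x v) (hbdd : BddAbove (Set.range (outDist E x))) :
    ∃ c, ∀ v, PathLe E 3 c v := by
  obtain ⟨c, hc⟩ := Nat.sSup_mem (Set.range_nonempty_iff_nonempty.mpr ⟨x⟩) hbdd
  have hmax : ∀ v, outDist E x v ≤ outDist E x c := fun v => hc ▸ le_csSup hbdd ⟨v, rfl⟩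
  rcases le_or_gt (outDist E x c) 3 with hle | hgt
  · exact ⟨x, fun v => (pathLe_outDist (hreach v).choose_spec).mono ((hmax v).trans hle)⟩
  · exact ⟨c, fun v => pathLe_of_outDist_add_two_le htour hreach (by omega) 2 (by
      have := hmax v; omega)⟩

end outDist

theorem exists_pathLe_three_or_exists_surjective_hom {V : Type*} {E : V → V → Prop}
    (htour : IsTournament E) {x : V} (hreach : ∀ v, ∃ n, PathLe E n x v) :
    (∃ c, ∀ v, PathLe E 3 c v) ∨
      ∃ φ : V → ℕ, Function.Surjective φ ∧ ∀ u v, E u v → φ v ≤ φ u + 1 := by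
  by_cases hbdd : BddAbove (Set.range (outDist E x))
  · exact .inl (exists_pathLe_three_of_bddAbove htour hreach hbdd)
  · exact .inr ⟨outDist E x, surjective_outDist_of_not_bddAbove hbdd,
      fun u _ huv => outDist_le_succ_of_edge (hreach u) huv⟩

theorem not_out3_characterization_general {V : Type*}
    (E : V → V → Prop) (htour : IsTournament E)
    (hOinf : ∃ x : V, ∀ v : V, Relation.ReflTransGen E x v) :
    ((¬ ∃ x : V, ∀ v : V, PathLe E 3 x v) ↔
      (∀ n, 3 ≤ n → ¬ ∃ x : V, ∀ v : V, PathLe E n x v)) ∧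
    ((¬ ∃ x : V, ∀ v : V, PathLe E 3 x v) ↔
      (∃ φ : V → ℕ, Function.Surjective φ ∧
        ∀ u v, E u v → (φ v ≤ φ u ∨ φ v = φ u + 1))) := by
  obtain ⟨x, hx⟩ := hOinf
  have hT₃ : ∀ φ : V → ℕ, (∀ u v, E u v → (φ v ≤ φ u ∨ φ v = φ u + 1)) ↔
      ∀ u v, E u v → φ v ≤ φ u + 1 :=
    fun φ => forall₂_congr fun u v => imp_congr_right fun _ => by omega
  rcases exists_pathLe_three_or_exists_surjective_hom htour
      (fun v => exists_pathLe_of_reflTransGen (hx v)) with hO₃ | ⟨φ, hsurj, hφ⟩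
  · refine ⟨⟨fun h => absurd hO₃ h, fun h => absurd hO₃ (h 3 le_rfl)⟩,
      ⟨fun h => absurd hO₃ h, fun ⟨φ, hsurj, hφ⟩ => ?_⟩⟩
    exact not_exists_pathLe_of_surjective hsurj ((hT₃ φ).mp hφ) 3
  · have hnot := not_exists_pathLe_of_surjective hsurj hφ
    exact ⟨⟨fun _ n _ => hnot n, fun _ => hnot 3⟩,
      ⟨fun _ => ⟨φ, hsurj, (hT₃ φ).mpr hφ⟩, fun _ => hnot 3⟩⟩

/-- For an infinite tournament `G ∈ O_∞`: `G ∉ O₃` iff `G ∉ O_n` for all `n ≥ 3`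
iff `G` maps homomorphically onto `T₃`. -/
theorem not_out3_characterization {V : Type*} [Infinite V]
    (E : V → V → Prop) (htour : IsTournament E)
    (hOinf : ∃ x : V, ∀ v : V, Relation.ReflTransGen E x v) :
    ((¬ ∃ x : V, ∀ v : V, PathLe E 3 x v) ↔
      (∀ n, 3 ≤ n → ¬ ∃ x : V, ∀ v : V, PathLe E n x v)) ∧
    ((¬ ∃ x : V, ∀ v : V, PathLe E 3 x v) ↔
      (∃ φ : V → ℕ, Function.Surjective φ ∧
        ∀ u v, E u v → (φ v ≤ φ u ∨ φ v = φ u + 1))) :=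
  not_out3_characterization_general E htour hOinf
end

section
/- Let G=(V,E,T) be a finite terminated digraph such that (V,E) is a tournament. Then G^∞ ∈ O₂ if and only if there exists a terminal vertex v ∈ T with V = Out_G^2(v). -/
/-- A vertex of `G^∞`: a finite sequence of nonterminal vertices followed by one terminal vertex. -/
def IsGVtx {V : Type*} (T : Set V) (x : List V) : Prop :=
  ∃ l t, x = l ++ [t] ∧ (∀ v ∈ l, v ∉ T) ∧ t ∈ T

/-- The edge relation of `G^∞`: `(x, y)` is an edge iff `(x(Δ), y(Δ)) ∈ E` where `Δ`
is the first coordinate where `x` and `y` differ. -/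
def GEdge {V : Type*} (E : V → V → Prop) (T : Set V)
    (x y : {x : List V // IsGVtx T x}) : Prop :=
  ∃ i a b, (x : List V).take i = (y : List V).take i ∧
    (x : List V)[i]? = some a ∧ (y : List V)[i]? = some b ∧ a ≠ b ∧ E a b

/-! Because `E` is a tournament, so is `G^∞`: two distinct vertices are never prefixes of one
another, so they differ first at some coordinate. An independent set of `G^∞` is therefore a
single vertex `l ++ [t]`. The vertices extending `l` form a module of `G^∞` (a vertex outside it
meets all of them at the same coordinate, in the same direction), so a path of length at most 2
between two of them cannot pass outside, and reading coordinate `l.length` along it gives a path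
of length at most 2 from `t` in `G`. Conversely `[v]` reaches every `u :: r` through the first
coordinate. -/

open Relation

namespace List

variable {α : Type*}

theorem getElem?_eq_of_take_eq {x y : List α} {i j : ℕ} (h : x.take i = y.take i) (hj : j < i) :
    x[j]? = y[j]? := by
  rw [← getElem?_take_of_lt hj, h, getElem?_take_of_lt hj]

theorem take_eq_take_of_le {x y : List α} {i j : ℕ} (h : x.take i = y.take i) (hji : j ≤ i) :
    x.take j = y.take j := by
  simpa [take_take, min_eq_left hji] using congrArg (take j) h

end List

section Relations

variable {V : Type*} {E : V → V → Prop}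

theorem IsTournament.ne_of_rel (htour : IsTournament E) {a b : V} (h : E a b) : a ≠ b :=
  fun hab => htour.1 a (hab ▸ h)

theorem IsTournament.asymm (htour : IsTournament E) {a b : V} (h : E a b) : ¬ E b a :=
  (htour.2 a b (htour.ne_of_rel h)).1 h

theorem Indep.subsingleton (htotal : ∀ x y, x ≠ y → E x y ∨ E y x)
    {A : Set V} (hA : Indep E A) : A.Subsingleton :=
  fun x hx y hy => by_contra fun hxy => (htotal x y hxy).elim (hA x hx y hy) (hA y hy x hx)

theorem pathLe_two_iff {x y : V} : PathLe E 2 x y ↔ ∃ z, ReflGen E x z ∧ ReflGen E z y := by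
  constructor
  · rintro ⟨k, hk, f, rfl, rfl, hf⟩
    interval_cases k
    · exact ⟨f 0, .refl, .refl⟩
    · exact ⟨f 1, .single (hf 0 (by omega)), .refl⟩
    · exact ⟨f 1, .single (hf 0 (by omega)), .single (hf 1 (by omega))⟩
  · have of_rel : E x y → PathLe E 2 x y := fun h =>
      ⟨1, by omega, fun n => if n = 0 then x else y, rfl, rfl, by intro i hi; interval_cases i; simpa⟩
    rintro ⟨z, _ | hxz, _ | hzy⟩
    · exact ⟨0, by omega, fun _ => x, rfl, rfl, by omega⟩
    · exact of_rel hzy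
    · exact of_rel hxz
    · refine ⟨2, le_rfl, fun n => if n = 0 then x else if n = 1 then z else y, rfl, rfl, ?_⟩
      intro i hi
      interval_cases i <;> simpa

end Relations

section GInf

variable {V : Type*} {E : V → V → Prop} {T : Set V}

theorem IsGVtx.singleton {v : V} (hv : v ∈ T) : IsGVtx T [v] := ⟨[], v, rfl, by simp, hv⟩

theorem IsGVtx.eq_singleton_of_head_mem {x : List V} {v : V} (hx : IsGVtx T x)
    (h0 : x[0]? = some v) (hv : v ∈ T) : x = [v] := by
  obtain ⟨_ | ⟨w, l⟩, t, rfl, hl, -⟩ := hx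
  · simpa using h0
  · simp only [List.cons_append, List.getElem?_cons_zero, Option.some.injEq] at h0
    exact absurd hv (h0 ▸ hl w (by simp))

theorem IsGVtx.exists_head {x : List V} (hx : IsGVtx T x) : ∃ u, x[0]? = some u := by
  obtain ⟨_ | ⟨w, l⟩, t, rfl, -, -⟩ := hx <;> simp

theorem IsGVtx.eq_of_prefix {x y : List V} (hx : IsGVtx T x) (hy : IsGVtx T y) (h : x <+: y) :
    x = y := by
  obtain ⟨l', t', rfl, hl', -⟩ := hy
  refine (List.prefix_concat_iff.1 h).resolve_right fun hpre => ?_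
  obtain ⟨l, t, rfl, -, ht⟩ := hx
  exact hl' t (hpre.subset (by simp)) ht

theorem exists_isGVtx_append_cons (hT : T.Nonempty) {l : List V} (hl : ∀ v ∈ l, v ∉ T) (u : V) :
    ∃ r, IsGVtx T (l ++ u :: r) := by
  by_cases hu : u ∈ T
  · exact ⟨[], l, u, rfl, hl, hu⟩
  · obtain ⟨t, ht⟩ := hT
    exact ⟨[t], l ++ [u], t, by simp, by simpa [or_imp, forall_and] using ⟨hl, hu⟩, ht⟩

theorem IsGVtx.exists_first_diff {x y : List V} (hx : IsGVtx T x) (hy : IsGVtx T y) (hxy : x ≠ y) :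
    ∃ i a b, x.take i = y.take i ∧ x[i]? = some a ∧ y[i]? = some b ∧ a ≠ b := by
  have hex : ∃ i : ℕ, x[i]? ≠ y[i]? := by
    by_contra! h
    exact hxy (List.ext_getElem? h)
  classical
  set i := Nat.find hex
  have htake : x.take i = y.take i := List.ext_getElem? fun j => by
    by_cases hj : j < i
    · rw [List.getElem?_take_of_lt hj, List.getElem?_take_of_lt hj]
      exact not_not.1 (Nat.find_min hex hj)
    · simp [hj]
  have hi : x[i]? ≠ y[i]? := Nat.find_spec hex
  have hprefix {p q : List V} (hp : IsGVtx T p) (hq : IsGVtx T q) (htake : p.take i = q.take i)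
      (hnone : p[i]? = none) : p = q :=
    hp.eq_of_prefix hq (List.take_of_length_le (List.getElem?_eq_none_iff.1 hnone) ▸
      htake ▸ List.take_prefix i q)
  match hxi : x[i]?, hyi : y[i]? with
  | some a, some b => exact ⟨i, a, b, htake, hxi, hyi, fun h => hi (by rw [hxi, hyi, h])⟩
  | none, _ => exact absurd (hprefix hx hy htake hxi) hxy
  | _, none => exact absurd (hprefix hy hx htake.symm hyi).symm hxy

theorem gEdge_irrefl (x : {x : List V // IsGVtx T x}) : ¬ GEdge E T x x :=
  fun ⟨_, _, _, _, ha, hb, hab, _⟩ => hab (Option.some.inj (ha.symm.trans hb))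

theorem gEdge_iff_of_take_eq {x y : {x : List V // IsGVtx T x}} {m : ℕ} {a b : V}
    (h : x.1.take m = y.1.take m) (hx : x.1[m]? = some a) (hy : y.1[m]? = some b) (hab : a ≠ b) :
    GEdge E T x y ↔ E a b := by
  refine ⟨fun ⟨i, a', b', hi, hxi, hyi, hne, hE⟩ => ?_, fun hE => ⟨m, a, b, h, hx, hy, hab, hE⟩⟩
  rcases lt_trichotomy i m with him | rfl | hmi
  · exact absurd (by simpa [hxi, hyi] using List.getElem?_eq_of_take_eq h him) hne
  · simp_all
  · exact absurd (by simpa [hx, hy] using List.getElem?_eq_of_take_eq hi hmi) hab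

theorem gEdge_of_rel_head (htour : IsTournament E) {x y : {x : List V // IsGVtx T x}} {a b : V}
    (hx : x.1[0]? = some a) (hy : y.1[0]? = some b) (h : E a b) : GEdge E T x y :=
  ⟨0, a, b, by simp, hx, hy, htour.ne_of_rel h, h⟩

theorem gEdge_total (htour : IsTournament E) {x y : {x : List V // IsGVtx T x}} (hxy : x ≠ y) :
    GEdge E T x y ∨ GEdge E T y x := by
  obtain ⟨i, a, b, h, hx, hy, hab⟩ := x.2.exists_first_diff y.2 (Subtype.coe_injective.ne hxy)
  rw [gEdge_iff_of_take_eq h hx hy hab, gEdge_iff_of_take_eq h.symm hy hx hab.symm]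
  exact or_iff_not_imp_right.2 (htour.2 a b hab).2

theorem reflGen_of_reflGen_gEdge {x y : {x : List V // IsGVtx T x}} {m : ℕ} {a b : V}
    (hxy : ReflGen (GEdge E T) x y) (h : x.1.take m = y.1.take m) (hx : x.1[m]? = some a)
    (hy : y.1[m]? = some b) : ReflGen E a b := by
  by_cases hab : a = b
  · exact hab ▸ .refl
  rcases hxy with _ | hxy
  · exact absurd (Option.some.inj (hx.symm.trans hy)) hab
  · exact .single ((gEdge_iff_of_take_eq h hx hy hab).1 hxy)

theorem pathLe_of_pathLe_gEdge (htour : IsTournament E) {x y : {x : List V // IsGVtx T x}}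
    {m : ℕ} {a b : V} (h : x.1.take m = y.1.take m) (hx : x.1[m]? = some a)
    (hy : y.1[m]? = some b) (hxy : PathLe (GEdge E T) 2 x y) : PathLe E 2 a b := by
  obtain ⟨z, hxz, hzy⟩ := pathLe_two_iff.1 hxy
  obtain ⟨hzx, c, hz⟩ : z.1.take m = x.1.take m ∧ ∃ c, z.1[m]? = some c := by
    rcases hxz with _ | ⟨i, α, γ, hi, hxi, hzi, hne, hE⟩
    · exact ⟨rfl, a, hx⟩
    by_cases him : i < m
    -- `z` would be entered and left through coordinate `i`, in opposite directions
    · have hyi : y.1[i]? = some α := List.getElem?_eq_of_take_eq h him ▸ hxi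
      have hzy_take : z.1.take i = y.1.take i := hi.symm.trans (List.take_eq_take_of_le h him.le)
      rcases reflGen_of_reflGen_gEdge hzy hzy_take hzi hyi with _ | hγα
      · exact absurd rfl hne
      · exact absurd hγα (htour.asymm hE)
    · push Not at him
      have hlen := (List.getElem?_eq_some_iff.1 hzi).1
      exact ⟨(List.take_eq_take_of_le hi him).symm, _, List.getElem?_eq_getElem (by omega)⟩
  exact pathLe_two_iff.2 ⟨c, reflGen_of_reflGen_gEdge hxz hzx.symm hx hz,
    reflGen_of_reflGen_gEdge hzy (hzx.trans h) hz hy⟩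

theorem reflGen_gEdge_singleton (htour : IsTournament E) {v u : V} (hv : v ∈ T)
    {y : {x : List V // IsGVtx T x}} (hy : y.1[0]? = some u) (h : ReflGen E v u) :
    ReflGen (GEdge E T) ⟨[v], .singleton hv⟩ y := by
  rcases h with _ | h
  · obtain rfl : y = ⟨[v], .singleton hv⟩ := Subtype.ext (y.2.eq_singleton_of_head_mem hy hv)
    exact .refl
  · exact .single (gEdge_of_rel_head htour rfl hy h)

end GInf

theorem ginf_out2_iff_general {V : Type*} (E : V → V → Prop)
    (htour : IsTournament E) (T : Set V) (hT : T.Nonempty) :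
    (∃ A : Set {x : List V // IsGVtx T x}, Indep (GEdge E T) A ∧
      ∀ v, ∃ a ∈ A, PathLe (GEdge E T) 2 a v) ↔
    (∃ v ∈ T, ∀ u : V, PathLe E 2 v u) := by
  constructor
  · rintro ⟨A, hA, hreach⟩
    obtain ⟨t₀, ht₀⟩ := hT
    obtain ⟨a, haA, -⟩ := hreach ⟨[t₀], .singleton ht₀⟩
    obtain ⟨l, t, hal, hl, ht⟩ := a.2
    refine ⟨t, ht, fun u => ?_⟩
    obtain ⟨r, hy⟩ := exists_isGVtx_append_cons ⟨t₀, ht₀⟩ hl u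
    obtain ⟨a', ha'A, hpath⟩ := hreach ⟨l ++ u :: r, hy⟩
    rw [hA.subsingleton (fun _ _ => gEdge_total htour) ha'A haA] at hpath
    exact pathLe_of_pathLe_gEdge htour (m := l.length) (by simp [hal]) (by simp [hal]) (by simp)
      hpath
  · rintro ⟨v, hv, hreach⟩
    refine ⟨{⟨[v], .singleton hv⟩}, fun x hx y hy => ?_, fun y => ⟨_, rfl, ?_⟩⟩
    · rw [hx, hy]
      exact gEdge_irrefl _
    obtain ⟨u, hu⟩ := y.2.exists_head
    obtain ⟨w, hvw, hwu⟩ := pathLe_two_iff.1 (hreach u)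
    rcases hwu with _ | hwu
    · exact pathLe_two_iff.2 ⟨y, reflGen_gEdge_singleton htour hv hu hvw, .refl⟩
    obtain ⟨r, hz⟩ := exists_isGVtx_append_cons hT (l := []) (by simp) w
    exact pathLe_two_iff.2 ⟨⟨w :: r, hz⟩, reflGen_gEdge_singleton htour hv rfl hvw,
      .single (gEdge_of_rel_head htour rfl hu hwu)⟩

/-- For a finite terminated tournament `G = (V,E,T)`:
`G^∞ ∈ O₂` iff some terminal vertex `v` has `V = Out²(v)`. -/
theorem ginf_out2_iff {V : Type*} [Fintype V] (E : V → V → Prop)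
    (htour : IsTournament E) (T : Set V) (hT : T.Nonempty) :
    (∃ A : Set {x : List V // IsGVtx T x}, Indep (GEdge E T) A ∧
      ∀ v, ∃ a ∈ A, PathLe (GEdge E T) 2 a v) ↔
    (∃ v ∈ T, ∀ u : V, PathLe E 2 v u) :=
  ginf_out2_iff_general E htour T hT
end
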